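/- The map χ : 𝕂 → ℍ, χ(t,x,φ) = (q(t,x), −W(t,x)), is a wave map (i.e., satisfies tr_k(∇Dχ)=0) from the Lorentzian manifold 𝕂 = ℝ×ℝ×S¹ with metric k = 4e^{4t}(−dt²+dx²) + R²(t,x)dφ² to the hyperbolic plane ℍ = (ℝ², h) with h = 4dy² + e^{4y}dx², if and only if W and q satisfy W_tt − W_xx + (R_t/R)W_t − (R_x/R)W_x + ((q_t²−q_x²)/2)e^{−4W} = 0 and q_tt − q_xx + (R_t/R)q_t − (R_x/R)q_x − 4q_t W_t + 4q_x W_x = 0. -/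

import Mathlib

open Real

noncomputable def pt (u : ℝ → ℝ → ℝ) : ℝ → ℝ → ℝ := fun t x => deriv (fun s => u s x) t
noncomputable def px (u : ℝ → ℝ → ℝ) : ℝ → ℝ → ℝ := fun t x => deriv (fun y => u t y) x

/-- Partial derivative on 𝕂 = ℝ_t × ℝ_x × S¹_φ for φ-independent functions,
represented as functions of (t,x). -/
noncomputable def kp : Fin 3 → (ℝ → ℝ → ℝ) → ℝ → ℝ → ℝ
  | 0 => pt
  | 1 => px
  | 2 => fun _ => 0

/-- The metric k = 4e^{4t}(−dt²+dx²) + R² dφ² on 𝕂. -/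
noncomputable def kmat (R : ℝ → ℝ → ℝ) : Fin 3 → Fin 3 → ℝ → ℝ → ℝ :=
  fun a b t x =>
    if a = b then
      (if a = 0 then -(4 * Real.exp (4 * t))
       else if a = 1 then 4 * Real.exp (4 * t)
       else (R t x) ^ 2)
    else 0

/-- The inverse metric of `kmat`. -/
noncomputable def kInv (R : ℝ → ℝ → ℝ) : Fin 3 → Fin 3 → ℝ → ℝ → ℝ :=
  fun a b t x =>
    if a = b then
      (if a = 0 then -(1 / (4 * Real.exp (4 * t)))
       else if a = 1 then 1 / (4 * Real.exp (4 * t))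
       else 1 / (R t x) ^ 2)
    else 0

/-- Christoffel symbols of the metric `kmat R`. -/
noncomputable def Γk (R : ℝ → ℝ → ℝ) (n l m : Fin 3) (t x : ℝ) : ℝ :=
  (1 / 2) * ∑ d : Fin 3, kInv R n d t x *
    (kp l (kmat R d m) t x + kp m (kmat R l d) t x - kp d (kmat R l m) t x)

/-- Partial derivative on the target ℝ² (coordinates (x,y)). -/
noncomputable def tp : Fin 2 → (ℝ × ℝ → ℝ) → ℝ × ℝ → ℝ
  | 0 => fun f p => deriv (fun s => f (s, p.2)) p.1
  | 1 => fun f p => deriv (fun s => f (p.1, s)) p.2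

/-- The hyperbolic metric h = 4dy² + e^{4y}dx² on ℝ²_{(x,y)}. -/
noncomputable def hmat : Fin 2 → Fin 2 → ℝ × ℝ → ℝ :=
  fun i j p => if i = j then (if i = 0 then Real.exp (4 * p.2) else 4) else 0

/-- The inverse hyperbolic metric. -/
noncomputable def hInv : Fin 2 → Fin 2 → ℝ × ℝ → ℝ :=
  fun i j p => if i = j then (if i = 0 then Real.exp (-(4 * p.2)) else 1 / 4) else 0

/-- Christoffel symbols of h. -/
noncomputable def Γh (i j k : Fin 2) (p : ℝ × ℝ) : ℝ :=
  (1 / 2) * ∑ d : Fin 2, hInv i d p *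
    (tp j (hmat d k) p + tp k (hmat j d) p - tp d (hmat j k) p)

set_option maxHeartbeats 3200000 in
/-- χ = (q, −W) is a wave map from (𝕂, k) to (ℝ², h) iff (W,q)
satisfies the reduced system. -/
theorem statement14 (R W q : ℝ → ℝ → ℝ)
    (hR : ContDiff ℝ (⊤ : ℕ∞) (fun p : ℝ × ℝ => R p.1 p.2))
    (hRpos : ∀ t x, 0 < R t x)
    (hW : ContDiff ℝ (⊤ : ℕ∞) (fun p : ℝ × ℝ => W p.1 p.2))
    (hq : ContDiff ℝ (⊤ : ℕ∞) (fun p : ℝ × ℝ => q p.1 p.2))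
    (χ : Fin 2 → ℝ → ℝ → ℝ)
    (hχ0 : χ 0 = q) (hχ1 : χ 1 = fun t x => -W t x) :
    (∀ (i : Fin 2) (t x : ℝ),
      ∑ l : Fin 3, ∑ m : Fin 3, kInv R l m t x *
        (kp l (kp m (χ i)) t x
          - ∑ n : Fin 3, Γk R n l m t x * kp n (χ i) t x
          + ∑ j : Fin 2, ∑ k : Fin 2,
              Γh i j k (χ 0 t x, χ 1 t x) * kp l (χ j) t x * kp m (χ k) t x) = 0)
    ↔
    ((∀ t x, pt (pt W) t x - px (px W) t x
        + (pt R t x / R t x) * pt W t x - (px R t x / R t x) * px W t x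
        + ((pt q t x) ^ 2 - (px q t x) ^ 2) / 2 * Real.exp (-(4 * W t x)) = 0) ∧
     (∀ t x, pt (pt q) t x - px (px q) t x
        + (pt R t x / R t x) * pt q t x - (px R t x / R t x) * px q t x
        - 4 * pt q t x * pt W t x + 4 * px q t x * px W t x = 0))  := by
  have hRt : ∀ t x : ℝ, DifferentiableAt ℝ (fun s => R s x) t := by
    intro t x
    exact (hR.differentiable (by simp)).comp (differentiable_id.prodMk (differentiable_const x)) t
  have hRx : ∀ t x : ℝ, DifferentiableAt ℝ (fun y => R t y) x := by
    intro t x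
    exact (hR.differentiable (by simp)).comp ((differentiable_const t).prodMk differentiable_id) x
  have e1 : ∀ t : ℝ, HasDerivAt (fun s : ℝ => Real.exp (4*s)) (4 * Real.exp (4*t)) t := by
    intro t
    have h := (Real.hasDerivAt_exp (4*t)).comp t ((hasDerivAt_id t).const_mul 4)
    simp only [Function.comp_def] at h
    rw [show 4 * Real.exp (4*t) = Real.exp (4*t) * (4*1) by ring]
    exact h
  have e2 : ∀ t : ℝ, deriv (fun s => 4 * Real.exp (4*s)) t = 16 * Real.exp (4*t) := by
    intro t
    have := ((e1 t).const_mul (4:ℝ)).deriv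
    rw [this]; ring
  have e3 : ∀ t : ℝ, deriv (fun s => -(4 * Real.exp (4*s))) t = -(16 * Real.exp (4*t)) := by
    intro t
    have := (((e1 t).const_mul (4:ℝ)).neg).deriv
    simp only [Pi.neg_def] at this
    rw [this]; ring
  have e4 : ∀ t : ℝ, deriv (fun s => Real.exp (4*s)) t = 4 * Real.exp (4*t) := fun t => (e1 t).deriv
  have e5 : ∀ t x : ℝ, deriv (fun s => R s x ^ 2) t = 2 * R t x * deriv (fun s => R s x) t := by
    intro t x
    rw [deriv_fun_pow (hRt t x) 2]; norm_num
  have e6 : ∀ t x : ℝ, deriv (fun y => R t y ^ 2) x = 2 * R t x * deriv (fun y => R t y) x := by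
    intro t x
    rw [deriv_fun_pow (hRx t x) 2]; norm_num
  have key1 : ∀ t x : ℝ,
      (∑ l : Fin 3, ∑ m : Fin 3, kInv R l m t x *
        (kp l (kp m (χ 1)) t x
          - ∑ n : Fin 3, Γk R n l m t x * kp n (χ 1) t x
          + ∑ j : Fin 2, ∑ k : Fin 2,
              Γh 1 j k (χ 0 t x, χ 1 t x) * kp l (χ j) t x * kp m (χ k) t x))
      = (pt (pt W) t x - px (px W) t x
        + (pt R t x / R t x) * pt W t x - (px R t x / R t x) * px W t x
        + ((pt q t x) ^ 2 - (px q t x) ^ 2) / 2 * Real.exp (-(4 * W t x)))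
        / (4 * Real.exp (4 * t)) := by
    intro t x
    have hRne : R t x ≠ 0 := ne_of_gt (hRpos t x)
    simp only [Γk, Γh, kInv, kmat, hInv, hmat, kp, tp, pt, px, hχ0, hχ1,
      Fin.sum_univ_three, Fin.sum_univ_two]
    simp only [Fin.reduceEq, reduceIte, deriv.neg, deriv.fun_neg, Pi.zero_apply, deriv_const', e2, e3, e4, e5, e6,
      Real.exp_neg, mul_neg, neg_neg, mul_zero, zero_mul, add_zero, zero_add, neg_zero, mul_one]
    field_simp
    ring
  have key0 : ∀ t x : ℝ,
      (∑ l : Fin 3, ∑ m : Fin 3, kInv R l m t x *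
        (kp l (kp m (χ 0)) t x
          - ∑ n : Fin 3, Γk R n l m t x * kp n (χ 0) t x
          + ∑ j : Fin 2, ∑ k : Fin 2,
              Γh 0 j k (χ 0 t x, χ 1 t x) * kp l (χ j) t x * kp m (χ k) t x))
      = -(pt (pt q) t x - px (px q) t x
        + (pt R t x / R t x) * pt q t x - (px R t x / R t x) * px q t x
        - 4 * pt q t x * pt W t x + 4 * px q t x * px W t x)
        / (4 * Real.exp (4 * t)) := by
    intro t x
    have hRne : R t x ≠ 0 := ne_of_gt (hRpos t x)
    simp only [Γk, Γh, kInv, kmat, hInv, hmat, kp, tp, pt, px, hχ0, hχ1,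
      Fin.sum_univ_three, Fin.sum_univ_two]
    simp only [Fin.reduceEq, reduceIte, deriv.neg, deriv.fun_neg, Pi.zero_apply, deriv_const', e2, e3, e4, e5, e6,
      Real.exp_neg, mul_neg, neg_neg, mul_zero, zero_mul, add_zero, zero_add, neg_zero, mul_one]
    field_simp
    ring
  constructor
  · intro h
    refine ⟨fun t x => ?_, fun t x => ?_⟩
    · have h1 := h 1 t x
      rw [key1 t x] at h1
      have hne : (4 * Real.exp (4*t)) ≠ 0 := by positivity
      exact (div_eq_zero_iff.mp h1).resolve_right hne
    · have h0 := h 0 t x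
      rw [key0 t x] at h0
      have hne : (4 * Real.exp (4*t)) ≠ 0 := by positivity
      have := (div_eq_zero_iff.mp h0).resolve_right hne
      linarith [neg_eq_zero.mp this]
  · rintro ⟨h1, h2⟩ i t x
    fin_cases i
    · have h := key0 t x
      rw [h2 t x, neg_zero, zero_div] at h
      exact h
    · have h := key1 t x
      rw [h1 t x, zero_div] at h
      exact h
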